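/- arXiv:1511.06718 — 2 statements merged into one kernel-verified Lean document; each statement's English description precedes it below -/
import Mathlib

section
/- Let E ∈ ℝ^{D×Z}₊ be a nonnegative matrix whose columns E_z satisfy Σ_{z=1}^Z E_z = (1,…,1)ᵀ ∈ ℝ^D, and suppose that for each z ∈ [Z] there exists a probability distribution p_z ∈ Δ with p_zᵀE_z = 1. If D = Z, then the vectors E_1,…,E_Z are exactly the standard basis vectors of ℝ^D (in some order), i.e., E is a permutation matrix, and moreover p_z = E_z for every z. -/
/-- Uniqueness for normalized nonnegative models: if D = Z and for each z some
distribution p_z rates value z with probability one, then the item vectors are exactly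
the standard basis vectors (E is a permutation matrix) and p_z = E_z. -/
theorem nnm_uniqueness (D : ℕ) (E : Fin D → Fin D → ℝ)
    (hE0 : ∀ z j, 0 ≤ E z j) (hE1 : ∀ j, ∑ z, E z j = 1)
    (p : Fin D → Fin D → ℝ)
    (hp0 : ∀ z j, 0 ≤ p z j) (hp1 : ∀ z, ∑ j, p z j = 1)
    (hrate : ∀ z, ∑ j, p z j * E z j = 1) :
    ∃ σ : Equiv.Perm (Fin D),
      (∀ z, E z = fun j => if j = σ z then 1 else 0) ∧ (∀ z, p z = E z) := by
  have hEle : ∀ z j, E z j ≤ 1 := by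
    intro z j
    calc E z j ≤ ∑ z', E z' j :=
          Finset.single_le_sum (fun i _ => hE0 i j) (Finset.mem_univ z)
      _ = 1 := hE1 j
  have hkey : ∀ z j, p z j * (1 - E z j) = 0 := by
    intro z j
    have hsum : ∑ j', p z j' * (1 - E z j') = 0 := by
      have h1 := hrate z
      have h2 := hp1 z
      have : ∑ j', p z j' * (1 - E z j') = (∑ j', p z j') - ∑ j', p z j' * E z j' := by
        rw [← Finset.sum_sub_distrib]
        apply Finset.sum_congr rfl
        intro x _; ring
      rw [this, h1, h2]; ring
    exact (Finset.sum_eq_zero_iff_of_nonneg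
      (fun j' _ => mul_nonneg (hp0 z j') (sub_nonneg.2 (hEle z j')))).mp
      hsum j (Finset.mem_univ j)
  have hpos : ∀ z, ∃ j, 0 < p z j := by
    intro z
    by_contra h
    push_neg at h
    have : ∑ j, p z j = 0 :=
      Finset.sum_eq_zero (fun j _ => le_antisymm (h j) (hp0 z j))
    rw [hp1 z] at this
    norm_num at this
  choose f hf using hpos
  have hEf : ∀ z, E z (f z) = 1 := by
    intro z
    rcases mul_eq_zero.mp (hkey z (f z)) with h | h
    · exact absurd h (ne_of_gt (hf z))
    · linarith
  have hinj : Function.Injective f := by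
    intro a b hab
    by_contra hne
    have hsub : ({a, b} : Finset (Fin D)).sum (fun z => E z (f a)) ≤ ∑ z, E z (f a) :=
      Finset.sum_le_sum_of_subset_of_nonneg (Finset.subset_univ _)
        (fun i _ _ => hE0 i (f a))
    rw [Finset.sum_pair hne, hE1, hEf a, hab, hEf b] at hsub
    norm_num at hsub
  have hbij : Function.Bijective f := Finite.injective_iff_bijective.mp hinj
  have hzero : ∀ z j, j ≠ f z → E z j = 0 := by
    intro z j hj
    obtain ⟨z', hz'⟩ := hbij.2 j
    have hne : z ≠ z' := by
      intro h; subst h; exact hj hz'.symm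
    have herase : E z' j + ∑ i ∈ Finset.univ.erase z', E i j = 1 := by
      rw [Finset.add_sum_erase Finset.univ (fun i => E i j) (Finset.mem_univ z')]
      exact hE1 j
    have hE1' : E z' j = 1 := by rw [← hz']; exact hEf z'
    rw [hE1'] at herase
    have h0 : ∑ i ∈ Finset.univ.erase z', E i j = 0 := by linarith
    exact (Finset.sum_eq_zero_iff_of_nonneg (fun i _ => hE0 i j)).mp h0 z
      (Finset.mem_erase.mpr ⟨hne, Finset.mem_univ z⟩)
  have hpzero : ∀ z j, j ≠ f z → p z j = 0 := by
    intro z j hj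
    rcases mul_eq_zero.mp (hkey z j) with h | h
    · exact h
    · have : E z j = 1 := by linarith
      rw [hzero z j hj] at this; norm_num at this
  have hpf : ∀ z, p z (f z) = 1 := by
    intro z
    have := hp1 z
    rwa [Finset.sum_eq_single (f z) (fun j _ hj => hpzero z j hj)
      (fun h => absurd (Finset.mem_univ (f z)) h)] at this
  refine ⟨Equiv.ofBijective f hbij, ?_, ?_⟩
  · intro z
    funext j
    by_cases hj : j = f z
    · simp [Equiv.ofBijective, hj, hEf z]
    · simp [Equiv.ofBijective, hj, hzero z j hj]
  · intro z
    funext j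
    by_cases hj : j = f z
    · rw [hj, hpf z, hEf z]
    · rw [hpzero z j hj, hzero z j hj]
end

section
/- Let E_1,…,E_Z ∈ ℝ^D₊ be nonnegative vectors with Σ_{z=1}^Z E_z = (1,…,1)ᵀ and suppose ‖E_z‖₂ ≥ 1 for all z. If Z = D, then E_zᵀE_{z'} = δ_{zz'} (Kronecker delta) for all z, z' ∈ [Z]. -/
/-- If Z = D, the E_z are nonnegative, sum to the all-ones vector and each has
ℓ₂-norm at least 1, then they are pairwise orthogonal with unit norm:
E_zᵀE_{z'} = δ_{zz'}. -/
theorem nnm_orthonormal (D : ℕ) (E : Fin D → Fin D → ℝ)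
    (hE0 : ∀ z j, 0 ≤ E z j) (hE1 : ∀ j, ∑ z, E z j = 1)
    (hnorm : ∀ z, 1 ≤ Real.sqrt (∑ j, (E z j) ^ 2)) :
    ∀ z z' : Fin D, ∑ j, E z j * E z' j = if z = z' then 1 else 0 := by
  set S : Fin D → Fin D → ℝ := fun z z' => ∑ j, E z j * E z' j with hSdef
  have hSnn : ∀ z z', 0 ≤ S z z' := fun z z' =>
    Finset.sum_nonneg fun j _ => mul_nonneg (hE0 z j) (hE0 z' j)
  have hdiag : ∀ z, 1 ≤ S z z := by
    intro z
    have h := hnorm z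
    have h2 : (0:ℝ) ≤ ∑ j, E z j ^ 2 := Finset.sum_nonneg fun j _ => sq_nonneg _
    have h3 := Real.sq_sqrt h2
    have h4 : 1 ≤ ∑ j, E z j ^ 2 := by
      nlinarith [Real.sqrt_nonneg (∑ j, E z j ^ 2)]
    simpa [hSdef, pow_two] using h4
  have hrow : ∀ z, ∑ z', S z z' = ∑ j, E z j := by
    intro z
    simp only [hSdef]
    rw [Finset.sum_comm]
    simp_rw [← Finset.mul_sum, hE1, mul_one]
  have htot : ∑ z, ∑ z', S z z' = (D : ℝ) := by
    simp_rw [hrow]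
    rw [Finset.sum_comm]
    simp [hE1]
  set g : Fin D → ℝ := fun z => ∑ z', S z z' with hgdef
  have hg1 : ∀ z, 1 ≤ g z := fun z =>
    le_trans (hdiag z)
      (Finset.single_le_sum (fun z' _ => hSnn z z') (Finset.mem_univ z))
  have hgsum : ∑ z, g z = (D : ℝ) := htot
  have hzero : ∑ z, (g z - 1) = 0 := by
    rw [Finset.sum_sub_distrib, hgsum]
    simp
  have hgeq : ∀ z, g z = 1 := by
    intro z
    have := (Finset.sum_eq_zero_iff_of_nonneg
      (fun w _ => by linarith [hg1 w])).mp hzero z (Finset.mem_univ z)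
    linarith
  intro z z'
  by_cases h : z = z'
  · subst h
    simp only [if_pos rfl]
    have hle : S z z ≤ g z :=
      Finset.single_le_sum (fun w _ => hSnn z w) (Finset.mem_univ z)
    have := hgeq z
    have := hdiag z
    show S z z = 1
    linarith
  · simp only [if_neg h]
    have hz' : z' ∈ Finset.univ.erase z := Finset.mem_erase.mpr ⟨Ne.symm h, Finset.mem_univ z'⟩
    have h1 : S z z' ≤ ∑ w ∈ Finset.univ.erase z, S z w :=
      Finset.single_le_sum (fun w _ => hSnn z w) hz'
    have h2 : S z z + ∑ w ∈ Finset.univ.erase z, S z w = g z :=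
      Finset.add_sum_erase _ _ (Finset.mem_univ z)
    have := hgeq z
    have := hdiag z
    have := hSnn z z'
    show S z z' = 0
    linarith
end
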